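/- arXiv:1110.6591 — 2 statements merged into one kernel-verified Lean document; each statement's English description precedes it below -/
import Mathlib

section
/- Let (Q, ·) be a finite quasigroup. Then (Q,·) is orthogonal to its (23)-parastrophe \ if and only if for all x, y, z ∈ Q: x·(x·z) = y·(y·z) implies x = y. -/
/-!
A solution of `x·y = a`, `x\y = b` must have `y = x·b`, so the solutions correspond to the
solutions `x` of `x·(x·b) = a`. Orthogonality thus says that every square map `x ↦ x·(x·b)` is
bijective, which on a finite set is the same as injective.
-/

theorem existsUnique_prod_graph_iff {α β : Type*} (g : α → β) (P : α → Prop) :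
    (∃! p : α × β, P p.1 ∧ p.2 = g p.1) ↔ ∃! x, P x := by
  constructor
  · rintro ⟨⟨x, y⟩, ⟨hx, -⟩, huniq⟩
    refine ⟨x, hx, fun x' hx' => ?_⟩
    exact congrArg Prod.fst (huniq (x', g x') ⟨hx', rfl⟩)
  · rintro ⟨x, hx, huniq⟩
    refine ⟨(x, g x), ⟨hx, rfl⟩, ?_⟩
    rintro p ⟨hp, hgraph⟩
    have hx' := huniq p.1 hp
    exact Prod.ext hx' (hgraph.trans (congrArg g hx'))

section LeftDivision

variable {Q : Type*} {mul ldiv : Q → Q → Q}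
  (h1 : ∀ x y, mul x (ldiv x y) = y) (h2 : ∀ x y, ldiv x (mul x y) = y)
include h1 h2

theorem ldiv_eq_iff_eq_mul {x y b : Q} : ldiv x y = b ↔ y = mul x b :=
  ⟨fun h => h ▸ (h1 x y).symm, fun h => h ▸ h2 x b⟩

theorem existsUnique_mul_ldiv_iff (a b : Q) :
    (∃! p : Q × Q, mul p.1 p.2 = a ∧ ldiv p.1 p.2 = b) ↔ ∃! x, mul x (mul x b) = a := by
  have hsys : ∀ p : Q × Q, (mul p.1 p.2 = a ∧ ldiv p.1 p.2 = b) ↔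
      (mul p.1 (mul p.1 b) = a ∧ p.2 = mul p.1 b) := by
    rintro ⟨x, y⟩
    dsimp only
    rw [ldiv_eq_iff_eq_mul h1 h2]
    constructor <;> rintro ⟨ha, rfl⟩ <;> exact ⟨ha, rfl⟩
  simp only [hsys]
  exact existsUnique_prod_graph_iff (fun x => mul x b) (fun x => mul x (mul x b) = a)

end LeftDivision

theorem orth_23_parastrophe_general {Q : Type*} [Fintype Q] (mul ldiv : Q → Q → Q)
    (h1 : ∀ x y, mul x (ldiv x y) = y) (h2 : ∀ x y, ldiv x (mul x y) = y) :
    (∀ a b : Q, ∃! p : Q × Q, mul p.1 p.2 = a ∧ ldiv p.1 p.2 = b) ↔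
      ∀ x y z : Q, mul x (mul x z) = mul y (mul y z) → x = y := by
  calc (∀ a b : Q, ∃! p : Q × Q, mul p.1 p.2 = a ∧ ldiv p.1 p.2 = b)
      ↔ ∀ b a : Q, ∃! x, mul x (mul x b) = a := by
        rw [forall_comm]; simp only [existsUnique_mul_ldiv_iff h1 h2]
    _ ↔ ∀ b : Q, Function.Bijective fun x => mul x (mul x b) := by
        simp only [Function.bijective_iff_existsUnique]
    _ ↔ ∀ b : Q, Function.Injective fun x => mul x (mul x b) := by
        simp only [Finite.injective_iff_bijective]
    _ ↔ ∀ x y z : Q, mul x (mul x z) = mul y (mul y z) → x = y :=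
        ⟨fun h x y z => @h z x y, fun h z x y => h x y z⟩

/-- a finite quasigroup is orthogonal to its (23)-parastrophe iff
x·(x·z) = y·(y·z) implies x = y. -/
theorem orth_23_parastrophe {Q : Type*} [Fintype Q] (mul ldiv : Q → Q → Q)
    (h1 : ∀ x y, mul x (ldiv x y) = y) (h2 : ∀ x y, ldiv x (mul x y) = y)
    (hl : ∀ x, Function.Bijective (mul x)) (hr : ∀ y, Function.Bijective (fun x => mul x y)) :
    (∀ a b : Q, ∃! p : Q × Q, mul p.1 p.2 = a ∧ ldiv p.1 p.2 = b) ↔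
      ∀ x y z : Q, mul x (mul x z) = mul y (mul y z) → x = y :=
  orth_23_parastrophe_general mul ldiv h1 h2
end

section
/- Let (Q, +) be a finite abelian group, φ, ψ automorphisms of (Q,+), a ∈ Q, and A(x,y) = φ(x) + ψ(y) + a the associated T-quasigroup. Then A is orthogonal to its (12)-parastrophe if and only if both φ - ψ and φ + ψ are bijections of Q. -/
/-!
The pair map `p ↦ (A p.1 p.2, A p.2 p.1)` is a translate of the additive endomorphism
`(x, y) ↦ (φ x + ψ y, φ y + ψ x)` of `Q × Q`, so on a finite group orthogonality means that this
endomorphism has trivial kernel. If `(φ - ψ) u = 0` or `(φ + ψ) u = 0`, then `(u, -u)` resp.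
`(u, u)` lies in the kernel; conversely a kernel element `(u, v)` has `(φ + ψ) (u + v) = 0`, and
once `v = -u` it has `(φ - ψ) u = 0`.
-/

open Function

def Orthogonal {α : Type*} (A B : α → α → α) : Prop :=
  ∀ c d : α, ∃! p : α × α, A p.1 p.2 = c ∧ B p.1 p.2 = d

theorem orthogonal_iff_bijective {α : Type*} (A B : α → α → α) :
    Orthogonal A B ↔ Bijective (fun p : α × α => (A p.1 p.2, B p.1 p.2)) := by
  simp only [Orthogonal, bijective_iff_existsUnique, Prod.forall, Prod.ext_iff]

section

variable {Q : Type*} [AddCommGroup Q]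

def crossSum (φ ψ : Q →+ Q) : Q × Q →+ Q × Q :=
  (φ.comp (.fst Q Q) + ψ.comp (.snd Q Q)).prod (φ.comp (.snd Q Q) + ψ.comp (.fst Q Q))

@[simp]
theorem crossSum_apply (φ ψ : Q →+ Q) (p : Q × Q) :
    crossSum φ ψ p = (φ p.1 + ψ p.2, φ p.2 + ψ p.1) :=
  rfl

theorem injective_crossSum_iff (φ ψ : Q →+ Q) :
    Injective (crossSum φ ψ) ↔
      Injective (fun x => φ x - ψ x) ∧ Injective (fun x => φ x + ψ x) := by
  change _ ↔ Injective ⇑(φ - ψ) ∧ Injective ⇑(φ + ψ)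
  rw [injective_iff_map_eq_zero, injective_iff_map_eq_zero, injective_iff_map_eq_zero]
  simp only [AddMonoidHom.sub_apply, AddMonoidHom.add_apply, crossSum_apply, Prod.forall,
    Prod.mk_eq_zero]
  constructor
  · intro h
    refine ⟨fun u hu => (h u (-u) ?_).1, fun u hu => (h u u ⟨hu, hu⟩).1⟩
    simp only [map_neg, ← sub_eq_add_neg, neg_add_eq_sub]
    exact ⟨hu, by rw [← neg_sub, hu, neg_zero]⟩
  · rintro ⟨hsub, hadd⟩ u v ⟨h₁, h₂⟩
    have huv : u + v = 0 :=
      hadd _ (by simp only [map_add]; linear_combination (norm := abel) h₁ + h₂)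
    obtain rfl : v = -u := eq_neg_of_add_eq_zero_right huv
    have hu : u = 0 := hsub _ (by simpa [← sub_eq_add_neg] using h₁)
    simp [hu]

end

/-- a T-quasigroup A(x,y) = φx + ψy + a is orthogonal to its (12)-parastrophe
iff φ - ψ and φ + ψ are bijections. -/
theorem T_orth_12 {Q : Type*} [AddCommGroup Q] [Fintype Q] (φ ψ : Q ≃+ Q) (a : Q)
    (A : Q → Q → Q) (hA : ∀ x y, A x y = φ x + ψ y + a) :
    (∀ c d : Q, ∃! p : Q × Q, A p.1 p.2 = c ∧ A p.2 p.1 = d) ↔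
      Function.Bijective (fun x : Q => φ x - ψ x) ∧
        Function.Bijective (fun x : Q => φ x + ψ x) := by
  have hpair : (fun p : Q × Q => (A p.1 p.2, flip A p.1 p.2)) =
      Equiv.addRight (a, a) ∘ crossSum (φ : Q →+ Q) ψ := by
    funext p
    simp [hA, flip]
  change Orthogonal A (flip A) ↔ _
  rw [orthogonal_iff_bijective, hpair, Equiv.comp_bijective, ← Finite.injective_iff_bijective,
    injective_crossSum_iff, Finite.injective_iff_bijective, Finite.injective_iff_bijective]
  rfl
end
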